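/- Let s ∈ ℝ, p ∈ (0,∞), q ∈ (p,∞), τ ∈ (0, 1/p - 1/q], and let t = {t_Q} be the sequence with t_{R_j} = |R_j|^{s/n+1/2+τ-1/p} for the cubes R_j = [0,2^{-j})^n, j ∈ ℤ, and t_Q = 0 otherwise. Then for every dyadic cube P one has |P|^{-τ} ( ∫_P ( Σ_{Q⊂P} [|Q|^{-s/n-1/2} |t_Q| χ_Q(x)]^q )^{p/q} dx )^{1/p} ≤ |P|^{-τ}( Σ_{j ≥ j_P} |R_j|^{(τ-1/p)p} |R_j| )^{1/p} ≤ C(n,p,τ) < ∞; hence ‖t‖_{ḟ^{s,τ}_{p,q}} ≤ C(n,p,τ). (The supremum over P reduces to P = R_k, k ∈ ℤ, since nonzero entries only occur at cubes R_j.) -/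

import Mathlib

open MeasureTheory ENNReal

/-- A dyadic cube `Q_{jk} = 2^{-j}([0,1)^n + k)` in `ℝⁿ`, recorded by its
generation `j ∈ ℤ` and position `k ∈ ℤⁿ`. -/
structure DyadicCube (n : ℕ) where
  j : ℤ
  k : Fin n → ℤ

namespace DyadicCube

/-- The dyadic cube as a subset of `ℝⁿ`. -/
def toSet {n : ℕ} (Q : DyadicCube n) : Set (Fin n → ℝ) :=
  {x | ∀ i, (Q.k i : ℝ) * (2 : ℝ) ^ (-Q.j) ≤ x i ∧
        x i < ((Q.k i : ℝ) + 1) * (2 : ℝ) ^ (-Q.j)}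

/-- The Lebesgue measure `|Q| = 2^{-jn}` of a dyadic cube, as an element of `ℝ≥0∞`. -/
noncomputable def vol {n : ℕ} (Q : DyadicCube n) : ℝ≥0∞ :=
  (2 : ℝ≥0∞) ^ (-(Q.j : ℝ) * n)

/-- The characteristic function `χ_Q`, with values in `ℝ≥0∞`. -/
noncomputable def ind {n : ℕ} (Q : DyadicCube n) (x : Fin n → ℝ) : ℝ≥0∞ :=
  Q.toSet.indicator (fun _ => (1 : ℝ≥0∞)) x

end DyadicCube

open DyadicCube

/-- The coefficient `|Q|^{-s/n - 1/2}`. -/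
noncomputable def coeff {n : ℕ} (s : ℝ) (Q : DyadicCube n) : ℝ≥0∞ :=
  Q.vol ^ (-(s / (n : ℝ)) - 1 / 2)

/-- The `ℓ^q`-norm `(Σ_i a_i^q)^{1/q}` of a family of extended nonnegative reals,
with the usual modification (`sup`) when `q = ∞`. -/
noncomputable def lqSum {ι : Type*} (q : ℝ≥0∞) (a : ι → ℝ≥0∞) : ℝ≥0∞ :=
  if q = ∞ then ⨆ i, a i else (∑' i, a i ^ q.toReal) ^ (1 / q.toReal)

/-- The `L^p`-norm `(∫_A g^p dx)^{1/p}` over a set `A ⊆ ℝⁿ`, with the usual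
modification (`sup` over `x ∈ A`) when `p = ∞`. -/
noncomputable def lpIntOn {n : ℕ} (p : ℝ≥0∞) (A : Set (Fin n → ℝ))
    (g : (Fin n → ℝ) → ℝ≥0∞) : ℝ≥0∞ :=
  if p = ∞ then ⨆ x ∈ A, g x
  else (∫⁻ x in A, g x ^ p.toReal) ^ (1 / p.toReal)

/-- The Triebel–Lizorkin-type sequence norm
`‖t‖_{ḟ^{s,τ}_{p,q}} = sup_P |P|^{-τ} ( ∫_P ( Σ_{Q ⊆ P} [|Q|^{-s/n-1/2} |t_Q| χ_Q(x)]^q )^{p/q} dx )^{1/p}`,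
with the usual modifications when `p = ∞` or `q = ∞`. -/
noncomputable def fNorm (n : ℕ) (s τ : ℝ) (p q : ℝ≥0∞) (t : DyadicCube n → ℂ) : ℝ≥0∞ :=
  ⨆ P : DyadicCube n, P.vol ^ (-τ) *
    lpIntOn p P.toSet fun x =>
      lqSum q fun Q : {Q : DyadicCube n // Q.toSet ⊆ P.toSet} =>
        coeff s Q.1 * ‖t Q.1‖₊ * ind Q.1 x

/-- The Besov-type sequence norm
`‖t‖_{ḃ^{s,τ}_{p,q}} = sup_P |P|^{-τ} ( Σ_{j ≥ j_P} ( ∫_P [ Σ_{Q ⊆ P, ℓ(Q)=2^{-j}} |Q|^{-s/n-1/2} |t_Q| χ_Q(x) ]^p dx )^{q/p} )^{1/q}`,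
with the usual modifications when `p = ∞` or `q = ∞`. -/
noncomputable def bNorm (n : ℕ) (s τ : ℝ) (p q : ℝ≥0∞) (t : DyadicCube n → ℂ) : ℝ≥0∞ :=
  ⨆ P : DyadicCube n, P.vol ^ (-τ) *
    lqSum q fun j : {j : ℤ // P.j ≤ j} =>
      lpIntOn p P.toSet fun x =>
        ∑' Q : {Q : DyadicCube n // Q.toSet ⊆ P.toSet ∧ Q.j = j.1},
          coeff s Q.1 * ‖t Q.1‖₊ * ind Q.1 x

/-- The `ḟ^{σ}_{∞,∞} = ḃ^{σ}_{∞,∞}` sequence norm `sup_Q |Q|^{-σ/n - 1/2} |t_Q|`. -/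
noncomputable def supNorm (n : ℕ) (σ : ℝ) (t : DyadicCube n → ℂ) : ℝ≥0∞ :=
  ⨆ Q : DyadicCube n, coeff σ Q * ‖t Q‖₊

/-- The test sequence with `t_{R_j} = |R_j|^{s/n + 1/2 + τ - 1/p}` for
`R_j = [0,2^{-j})^n` (the dyadic cube with `k = 0`), and `t_Q = 0` otherwise. -/
noncomputable def testSeq (n : ℕ) (s τ p : ℝ) : DyadicCube n → ℂ := fun Q =>
  if Q.k = 0 then
    ((((2 : ℝ) ^ (-(Q.j : ℝ) * n)) ^ (s / n + 1 / 2 + τ - 1 / p) : ℝ) : ℂ)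
  else 0

/-- The cube `R_j = [0, 2^{-j})^n`. -/
def Rcube (n : ℕ) (j : ℤ) : DyadicCube n := ⟨j, 0⟩

/-!
Since `p ≤ q`, the `ℓ^q`-norm is dominated by the `ℓ^p`-norm, so raising the inner sum to the
power `p` and integrating over `P` gives at most `Σ_{Q ⊆ P} (|Q|^{-s/n-1/2} |t_Q|)^p |Q|`.
Only the cubes `R_j ⊆ P`, that is `j ≥ j_P`, contribute, and each contributes
`|R_j|^{(τ-1/p)p} |R_j| = 2^{-jnτp}`. The geometric series sums to `|P|^{τp} (1 - 2^{-nτp})⁻¹`,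
so the factor `|P|^{-τ}` cancels and the bound `(1 - 2^{-nτp})^{-1/p}` is uniform in `P`.
-/

namespace ENNReal

theorem rpow_finsetSum_le_sum_rpow {ι : Type*} (s : Finset ι) (a : ι → ℝ≥0∞) {r : ℝ}
    (hr₀ : 0 < r) (hr₁ : r ≤ 1) : (∑ i ∈ s, a i) ^ r ≤ ∑ i ∈ s, a i ^ r := by
  classical
  induction s using Finset.induction with
  | empty => simp [zero_rpow_of_pos hr₀]
  | insert i s hi ih =>
    rw [Finset.sum_insert hi, Finset.sum_insert hi]
    exact (rpow_add_le_add_rpow _ _ hr₀.le hr₁).trans (add_le_add_right ih _)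

theorem rpow_tsum_le_tsum_rpow {ι : Type*} (a : ι → ℝ≥0∞) {r : ℝ} (hr₀ : 0 < r) (hr₁ : r ≤ 1) :
    (∑' i, a i) ^ r ≤ ∑' i, a i ^ r := by
  rw [← le_rpow_inv_iff hr₀, ENNReal.tsum_eq_iSup_sum (f := a)]
  refine iSup_le fun s => (le_rpow_inv_iff hr₀).2 ?_
  exact (rpow_finsetSum_le_sum_rpow s a hr₀ hr₁).trans (ENNReal.sum_le_tsum s)

theorem tsum_Ici_rpow_neg_mul {b : ℝ≥0∞} (hb₀ : b ≠ 0) (hb : b ≠ ∞) (m : ℤ) (c : ℝ) :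
    ∑' j : {j : ℤ // m ≤ j}, b ^ (-(j : ℝ) * c) = b ^ (-(m : ℝ) * c) * (1 - b ^ (-c))⁻¹ := by
  let shift : ℕ → {j : ℤ // m ≤ j} := fun k => ⟨m + k, by omega⟩
  have hshift : Function.Bijective shift := by
    refine ⟨fun k l h => by simpa [shift] using h, fun j => ?_⟩
    obtain ⟨k, hk⟩ := Int.le.dest j.2
    exact ⟨k, Subtype.ext hk⟩
  have hterm (k : ℕ) : b ^ (-((shift k : ℤ) : ℝ) * c) = b ^ (-(m : ℝ) * c) * (b ^ (-c)) ^ k := by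
    rw [← rpow_mul_natCast, ← rpow_add _ _ hb₀ hb]
    congr 1
    push_cast [shift]
    ring
  rw [← (Equiv.ofBijective shift hshift).tsum_eq]
  simp only [Equiv.ofBijective_apply, hterm, ENNReal.tsum_mul_left, tsum_geometric]

end ENNReal

theorem lqSum_ofReal {ι : Type*} {q : ℝ} (hq : 0 ≤ q) (a : ι → ℝ≥0∞) :
    lqSum (ENNReal.ofReal q) a = (∑' i, a i ^ q) ^ (1 / q) := by
  rw [lqSum, if_neg ofReal_ne_top, toReal_ofReal hq]

theorem lpIntOn_ofReal {n : ℕ} {p : ℝ} (hp : 0 ≤ p) (A : Set (Fin n → ℝ))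
    (g : (Fin n → ℝ) → ℝ≥0∞) :
    lpIntOn (ENNReal.ofReal p) A g = (∫⁻ x in A, g x ^ p) ^ (1 / p) := by
  rw [lpIntOn, if_neg ofReal_ne_top, toReal_ofReal hp]

theorem lqSum_rpow_le_tsum_rpow {ι : Type*} {p q : ℝ} (hp : 0 < p) (hpq : p ≤ q)
    (a : ι → ℝ≥0∞) : lqSum (ENNReal.ofReal q) a ^ p ≤ ∑' i, a i ^ p := by
  have hq := hp.trans_le hpq
  rw [lqSum_ofReal hq.le, ← rpow_mul, one_div_mul_eq_div]
  calc (∑' i, a i ^ q) ^ (p / q)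
      ≤ ∑' i, (a i ^ q) ^ (p / q) :=
        rpow_tsum_le_tsum_rpow _ (div_pos hp hq) ((div_le_one hq).2 hpq)
    _ = ∑' i, a i ^ p := by simp_rw [← rpow_mul, mul_div_cancel₀ _ hq.ne']

theorem lintegral_lqSum_indicator_rpow_le {α ι : Type*} [MeasurableSpace α] [Countable ι]
    (μ : Measure α) {p q : ℝ} (hp : 0 < p) (hpq : p ≤ q) (a : ι → ℝ≥0∞) {E : ι → Set α}
    (hE : ∀ i, MeasurableSet (E i)) :
    ∫⁻ x, lqSum (ENNReal.ofReal q) (fun i => a i * (E i).indicator (fun _ => 1) x) ^ p ∂μ ≤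
      ∑' i, a i ^ p * μ (E i) := by
  have hpow : ∀ x i, (a i * (E i).indicator (fun _ => 1) x) ^ p =
      (E i).indicator (fun _ => a i ^ p) x := by
    intro x i
    by_cases hx : x ∈ E i <;> simp [hx, zero_rpow_of_pos hp]
  calc ∫⁻ x, lqSum (ENNReal.ofReal q) (fun i => a i * (E i).indicator (fun _ => 1) x) ^ p ∂μ
      ≤ ∫⁻ x, ∑' i, (E i).indicator (fun _ => a i ^ p) x ∂μ :=
        lintegral_mono fun x => (lqSum_rpow_le_tsum_rpow hp hpq _).trans_eq (tsum_congr (hpow x))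
    _ = ∑' i, a i ^ p * μ (E i) := by
        rw [lintegral_tsum fun i => (measurable_const.indicator (hE i)).aemeasurable]
        exact tsum_congr fun i => lintegral_indicator_const (hE i) _

namespace DyadicCube

variable {n : ℕ}

instance : Countable (DyadicCube n) :=
  Function.Injective.countable (f := fun Q : DyadicCube n => (Q.j, Q.k))
    fun Q Q' h => by cases Q; cases Q'; simpa using h

theorem toSet_eq_pi (Q : DyadicCube n) :
    Q.toSet = Set.univ.pi fun i =>
      Set.Ico ((Q.k i : ℝ) * (2 : ℝ) ^ (-Q.j)) (((Q.k i : ℝ) + 1) * (2 : ℝ) ^ (-Q.j)) := by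
  ext x
  simp [toSet]

theorem measurableSet_toSet (Q : DyadicCube n) : MeasurableSet Q.toSet := by
  rw [toSet_eq_pi]
  exact MeasurableSet.univ_pi fun _ => measurableSet_Ico

theorem volume_toSet (Q : DyadicCube n) : volume Q.toSet = Q.vol := by
  have hside : ENNReal.ofReal ((2 : ℝ) ^ (-Q.j)) = (2 : ℝ≥0∞) ^ (-(Q.j : ℝ)) := by
    rw [← Real.rpow_intCast, ← ofReal_rpow_of_pos two_pos]
    norm_num
  simp_rw [toSet_eq_pi, volume_pi_pi, Real.volume_Ico, ← sub_mul, add_sub_cancel_left, one_mul,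
    hside, Finset.prod_const, Finset.card_univ, Fintype.card_fin, vol, rpow_mul_natCast]

theorem vol_rpow (Q : DyadicCube n) (a : ℝ) :
    Q.vol ^ a = (2 : ℝ≥0∞) ^ (-(Q.j : ℝ) * (n * a)) := by
  rw [vol, ← rpow_mul, mul_assoc]

theorem vol_ne_zero (Q : DyadicCube n) : Q.vol ≠ 0 := by
  simp [vol, rpow_eq_zero_iff]

theorem vol_ne_top (Q : DyadicCube n) : Q.vol ≠ ∞ := by
  simp [vol, rpow_eq_top_iff]

theorem j_le_of_toSet_subset (hn : 0 < n) {P Q : DyadicCube n} (h : Q.toSet ⊆ P.toSet) :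
    P.j ≤ Q.j := by
  have hvol : Q.vol ≤ P.vol := by
    simpa only [volume_toSet] using measure_mono (μ := volume) h
  by_contra! hlt
  refine hvol.not_gt (rpow_lt_rpow_of_exponent_lt one_lt_two ofNat_ne_top ?_)
  exact mul_lt_mul_of_pos_right (neg_lt_neg (by exact_mod_cast hlt)) (by exact_mod_cast hn)

end DyadicCube

theorem Rcube_injective (n : ℕ) : Function.Injective (Rcube n) :=
  fun _ _ h => congrArg DyadicCube.j h

theorem Rcube_j_eq_of_k_eq_zero {n : ℕ} {Q : DyadicCube n} (hQ : Q.k = 0) : Rcube n Q.j = Q := by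
  cases Q
  simp_all [Rcube]

theorem testSeq_of_k_ne_zero {n : ℕ} (s τ p : ℝ) {Q : DyadicCube n} (hQ : Q.k ≠ 0) :
    testSeq n s τ p Q = 0 :=
  if_neg hQ

theorem coeff_mul_nnnorm_testSeq {n : ℕ} (s τ p : ℝ) {Q : DyadicCube n} (hQ : Q.k = 0) :
    coeff s Q * ‖testSeq n s τ p Q‖₊ = Q.vol ^ (τ - 1 / p) := by
  have hnorm : (‖testSeq n s τ p Q‖₊ : ℝ≥0∞) = Q.vol ^ (s / n + 1 / 2 + τ - 1 / p) := by
    rw [testSeq, if_pos hQ, Complex.nnnorm_real, ← enorm_eq_nnnorm,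
      Real.enorm_eq_ofReal (by positivity), ← ofReal_rpow_of_pos (by positivity),
      ← ofReal_rpow_of_pos two_pos]
    norm_num [vol]
  rw [coeff, hnorm, ← rpow_add _ _ (vol_ne_zero Q) (vol_ne_top Q)]
  ring_nf

theorem tsum_subcubes_testSeq_le {n : ℕ} (hn : 0 < n) (s τ : ℝ) {p : ℝ} (hp : 0 < p)
    (P : DyadicCube n) :
    ∑' Q : {Q : DyadicCube n // Q.toSet ⊆ P.toSet},
        (coeff s Q.1 * ‖testSeq n s τ p Q.1‖₊) ^ p * Q.1.vol ≤
      ∑' j : {j : ℤ // P.j ≤ j}, (Rcube n j.1).vol ^ ((τ - 1 / p) * p) * (Rcube n j.1).vol := by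
  set f : DyadicCube n → ℝ≥0∞ := fun Q => (coeff s Q * ‖testSeq n s τ p Q‖₊) ^ p * Q.vol
  have hf (Q : DyadicCube n) (hQ : Q.k ≠ 0) : f Q = 0 := by
    simp [f, testSeq_of_k_ne_zero s τ p hQ, zero_rpow_of_pos hp]
  set S : Set (DyadicCube n) := {Q | Q.toSet ⊆ P.toSet}
  have hsupp : Function.support (S.indicator f) ⊆ Set.range (Rcube n) := by
    intro Q hQ
    have hk : Q.k = 0 := by
      by_contra hk
      exact hQ (Set.indicator_apply_eq_zero.2 fun _ => hf Q hk)
    exact ⟨Q.j, Rcube_j_eq_of_k_eq_zero hk⟩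
  set g : ℤ → ℝ≥0∞ := fun j => (Rcube n j).vol ^ ((τ - 1 / p) * p) * (Rcube n j).vol
  calc ∑' Q : S, f Q
      = ∑' Q, S.indicator f Q := tsum_subtype S f
    _ = ∑' j, S.indicator f (Rcube n j) := ((Rcube_injective n).tsum_eq hsupp).symm
    _ ≤ ∑' j, {j | P.j ≤ j}.indicator g j := by
        refine ENNReal.tsum_le_tsum fun j => ?_
        by_cases hj : (Rcube n j).toSet ⊆ P.toSet
        · have hPj : j ∈ {j | P.j ≤ j} := j_le_of_toSet_subset hn hj
          rw [Set.indicator_of_mem (s := S) hj, Set.indicator_of_mem hPj]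
          simp only [f, g, coeff_mul_nnnorm_testSeq s τ p (rfl : (Rcube n j).k = 0), ← rpow_mul,
            le_refl]
        · rw [Set.indicator_of_notMem (s := S) hj]
          exact zero_le
    _ = ∑' j : {j // P.j ≤ j}, g j := (tsum_subtype {j | P.j ≤ j} g).symm

theorem lpIntOn_testSeq_le {n : ℕ} {p q : ℝ} (hn : 0 < n) (s τ : ℝ) (hp : 0 < p)
    (hpq : p ≤ q) (P : DyadicCube n) :
    (lpIntOn (ENNReal.ofReal p) P.toSet fun x =>
        lqSum (ENNReal.ofReal q) fun Q : {Q : DyadicCube n // Q.toSet ⊆ P.toSet} =>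
          coeff s Q.1 * ‖testSeq n s τ p Q.1‖₊ * ind Q.1 x) ≤
      (∑' j : {j : ℤ // P.j ≤ j}, (Rcube n j.1).vol ^ ((τ - 1 / p) * p) * (Rcube n j.1).vol) ^
        (1 / p) := by
  rw [lpIntOn_ofReal hp.le]
  gcongr
  calc _ ≤ ∑' Q : {Q : DyadicCube n // Q.toSet ⊆ P.toSet},
          (coeff s Q.1 * ‖testSeq n s τ p Q.1‖₊) ^ p * volume.restrict P.toSet Q.1.toSet :=
        lintegral_lqSum_indicator_rpow_le _ hp hpq _ fun Q => measurableSet_toSet Q.1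
    _ = ∑' Q : {Q : DyadicCube n // Q.toSet ⊆ P.toSet},
          (coeff s Q.1 * ‖testSeq n s τ p Q.1‖₊) ^ p * Q.1.vol := by
        refine tsum_congr fun Q => ?_
        rw [Measure.restrict_apply (measurableSet_toSet Q.1), Set.inter_eq_left.2 Q.2,
          volume_toSet]
    _ ≤ _ := tsum_subcubes_testSeq_le hn s τ hp P

theorem vol_rpow_neg_mul_tsum_Rcube_eq {n : ℕ} {p : ℝ} (hp : 0 < p) (τ : ℝ)
    (P : DyadicCube n) :
    P.vol ^ (-τ) *
        (∑' j : {j : ℤ // P.j ≤ j}, (Rcube n j.1).vol ^ ((τ - 1 / p) * p) * (Rcube n j.1).vol) ^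
          (1 / p) =
      (1 - (2 : ℝ≥0∞) ^ (-(n * (τ * p))))⁻¹ ^ (1 / p) := by
  have hterm (j : {j : ℤ // P.j ≤ j}) :
      (Rcube n j.1).vol ^ ((τ - 1 / p) * p) * (Rcube n j.1).vol =
        (2 : ℝ≥0∞) ^ (-(j : ℝ) * (n * (τ * p))) := by
    nth_rewrite 2 [← rpow_one (Rcube n j.1).vol]
    rw [← rpow_add _ _ (vol_ne_zero _) (vol_ne_top _), vol_rpow]
    congr 3
    field_simp
    ring
  have hexp : -τ + τ * p * (1 / p) = 0 := by
    field_simp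
    ring
  rw [tsum_congr hterm, tsum_Ici_rpow_neg_mul two_ne_zero ofNat_ne_top, ← vol_rpow,
    mul_rpow_of_nonneg _ _ (by positivity), ← rpow_mul, ← mul_assoc,
    ← rpow_add _ _ (vol_ne_zero P) (vol_ne_top P), hexp, rpow_zero, one_mul]

theorem stmt12_general (n : ℕ) (hn : 0 < n) (s p q τ : ℝ)
    (hp : 0 < p) (hpq : p < q) (hτ : 0 < τ) :
    ∃ C : ℝ≥0∞, C ≠ ∞ ∧
      (∀ P : DyadicCube n,
        (P.vol ^ (-τ) *
            lpIntOn (ENNReal.ofReal p) P.toSet fun x =>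
              lqSum (ENNReal.ofReal q)
                fun Q : {Q : DyadicCube n // Q.toSet ⊆ P.toSet} =>
                  coeff s Q.1 * ‖testSeq n s τ p Q.1‖₊ * ind Q.1 x) ≤
          P.vol ^ (-τ) *
            (∑' j : {j : ℤ // P.j ≤ j},
              (Rcube n j.1).vol ^ ((τ - 1 / p) * p) * (Rcube n j.1).vol) ^ (1 / p) ∧
        P.vol ^ (-τ) *
            (∑' j : {j : ℤ // P.j ≤ j},
              (Rcube n j.1).vol ^ ((τ - 1 / p) * p) * (Rcube n j.1).vol) ^ (1 / p) ≤ C) ∧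
      fNorm n s τ (ENNReal.ofReal p) (ENNReal.ofReal q) (testSeq n s τ p) ≤ C := by
  have hbound (P : DyadicCube n) := mul_le_mul_right (lpIntOn_testSeq_le hn s τ hp hpq.le P)
    (P.vol ^ (-τ))
  have hsum (P : DyadicCube n) := (vol_rpow_neg_mul_tsum_Rcube_eq (n := n) hp τ P).le
  refine ⟨_, ?_, fun P => ⟨hbound P, hsum P⟩, iSup_le fun P => (hbound P).trans (hsum P)⟩
  have hratio : (2 : ℝ≥0∞) ^ (-(n * (τ * p))) < 1 :=
    rpow_lt_one_of_one_lt_of_neg one_lt_two (neg_lt_zero.2 (by positivity))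
  exact rpow_ne_top_of_nonneg (by positivity) (inv_ne_top.2 (tsub_pos_of_lt hratio).ne')

/-- for `s ∈ ℝ`, `p ∈ (0,∞)`, `q ∈ (p,∞)`, `τ ∈ (0, 1/p - 1/q]` and the
test sequence `t` (with `t_{R_j} = |R_j|^{s/n+1/2+τ-1/p}`, zero otherwise), there is a
finite constant `C = C(n,p,τ)` such that for every dyadic cube `P` the local
Triebel–Lizorkin-type quantity is at most
`|P|^{-τ} ( Σ_{j ≥ j_P} |R_j|^{(τ-1/p)p} |R_j| )^{1/p} ≤ C`; hence
`‖t‖_{ḟ^{s,τ}_{p,q}} ≤ C`. -/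
theorem stmt12 (n : ℕ) (hn : 0 < n) (s p q τ : ℝ)
    (hp : 0 < p) (hpq : p < q) (hτ : 0 < τ) (hτ' : τ ≤ 1 / p - 1 / q) :
    ∃ C : ℝ≥0∞, C ≠ ∞ ∧
      (∀ P : DyadicCube n,
        (P.vol ^ (-τ) *
            lpIntOn (ENNReal.ofReal p) P.toSet fun x =>
              lqSum (ENNReal.ofReal q)
                fun Q : {Q : DyadicCube n // Q.toSet ⊆ P.toSet} =>
                  coeff s Q.1 * ‖testSeq n s τ p Q.1‖₊ * ind Q.1 x) ≤
          P.vol ^ (-τ) *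
            (∑' j : {j : ℤ // P.j ≤ j},
              (Rcube n j.1).vol ^ ((τ - 1 / p) * p) * (Rcube n j.1).vol) ^ (1 / p) ∧
        P.vol ^ (-τ) *
            (∑' j : {j : ℤ // P.j ≤ j},
              (Rcube n j.1).vol ^ ((τ - 1 / p) * p) * (Rcube n j.1).vol) ^ (1 / p) ≤ C) ∧
      fNorm n s τ (ENNReal.ofReal p) (ENNReal.ofReal q) (testSeq n s τ p) ≤ C :=
  stmt12_general n hn s p q τ hp hpq hτ
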